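/- arXiv:2605.12876 — 3 statements merged into one kernel-verified Lean document; each statement's English description precedes it below -/
import Mathlib

section
/- Let S be a countable set, p₁ and q₁ probability mass functions on S with the same support, and γ₁(z₁) = q₁(z₁)/p₁(z₁) > 0 on the support. Let D ≥ 1, σ > 0, x₂ ∈ ℝ^D, and Δ ∈ ℝ^D with r := ‖Δ‖₂ > 0. Let v be the product of the discrete measure with mass function q₁ on S and the D-fold product of one-dimensional Gaussian measures N((x₂ + Δ)ᵢ, σ²) on ℝ^D. Define γ₂(z₂) = exp(σ⁻²·Δᵀ(z₂ − x₂) − r²/(2σ²)) and γ(z₁,z₂) = γ₁(z₁)·γ₂(z₂). Then for every t > 0, v({(z₁,z₂) : γ(z₁,z₂) ≤ t}) = Σ_{z₁∈S} q₁(z₁) · Φ((r²/2 + σ²(log t − log γ₁(z₁)))/(σr) − r/σ), where Φ is the standard normal cumulative distribution function. -/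
/-! Conditioning on the discrete coordinate `z₁` turns the event `γ ≤ t` into the half-space
`Δᵀ(z₂ - x₂) ≤ σ² (log t - log γ₁ z₁) + r²/2` of the Gaussian coordinate. Under
`N(x₂ + Δ, σ²I)` the statistic `Δᵀ(z₂ - x₂)` is a linear image of independent Gaussians, hence
`N(r², σ²r²)` (compare characteristic functions), so the conditional probability is a value of `Φ`;
averaging over `z₁ ∼ q₁` gives the sum. -/

open MeasureTheory ProbabilityTheory

/-- The standard normal cumulative distribution function `Φ`. -/
noncomputable def stdNormalCDF (t : ℝ) : ℝ :=
  ((gaussianReal 0 1) (Set.Iic t)).toReal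

/-- The discrete measure on a countable set with mass function `p`. -/
noncomputable def discreteMeasure {S : Type*} [MeasurableSpace S] (p : S → ℝ) :
    Measure S :=
  Measure.sum (fun z => ENNReal.ofReal (p z) • Measure.dirac z)

open Real Set
open scoped NNReal

lemma gaussianReal_Iic_toReal_eq_stdNormalCDF {m s : ℝ} (hs : 0 < s) (x : ℝ) :
    (gaussianReal m (.mk (s ^ 2) (sq_nonneg s)) (Iic x)).toReal = stdNormalCDF ((x - m) / s) := by
  have hstd : gaussianReal m (.mk (s ^ 2) (sq_nonneg s))
      = ((gaussianReal 0 1).map (s * ·)).map (· + m) := by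
    rw [gaussianReal_map_const_mul, gaussianReal_map_add_const, mul_zero, zero_add, mul_one]
  have hpre : (s * ·) ⁻¹' ((· + m) ⁻¹' Iic x) = Iic ((x - m) / s) := by
    ext y
    simp only [mem_preimage, mem_Iic, le_div_iff₀ hs]
    constructor <;> intro h <;> linarith
  rw [hstd, Measure.map_apply (measurable_add_const m) measurableSet_Iic,
    Measure.map_apply (measurable_const_mul s) (measurableSet_Iic.preimage (measurable_add_const m)),
    hpre, stdNormalCDF]

lemma discreteMeasure_prod_apply_toReal {S β : Type*} [MeasurableSpace S]
    [MeasurableSingletonClass S] [MeasurableSpace β] {q : S → ℝ} (hq : ∀ z, 0 ≤ q z)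
    (ν : Measure β) [IsFiniteMeasure ν] {A : Set (S × β)} (hA : MeasurableSet A) :
    ((discreteMeasure q).prod ν A).toReal = ∑' z, q z * (ν (Prod.mk z ⁻¹' A)).toReal := by
  rw [Measure.prod_apply hA, discreteMeasure, lintegral_sum_measure]
  simp_rw [lintegral_smul_measure, lintegral_dirac, smul_eq_mul]
  rw [ENNReal.tsum_toReal_eq fun z => ENNReal.mul_ne_top ENNReal.ofReal_ne_top (measure_ne_top _ _)]
  simp_rw [ENNReal.toReal_mul, ENNReal.toReal_ofReal (hq _)]

lemma mul_exp_le_iff_le_log_sub {g t u : ℝ} (hg : 0 < g) (ht : 0 < t) :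
    g * exp u ≤ t ↔ u ≤ log t - log g := by
  rw [← log_div ht.ne' hg.ne', le_log_iff_exp_le (div_pos ht hg), le_div_iff₀ hg, mul_comm]

open Complex in
lemma map_pi_gaussianReal_sum_mul {ι : Type*} [Fintype ι] (m : ι → ℝ) (v : ι → ℝ≥0)
    (c : ι → ℝ) :
    (Measure.pi fun i => gaussianReal (m i) (v i)).map (fun z => ∑ i, c i * z i)
      = gaussianReal (∑ i, c i * m i) (∑ i, .mk (c i ^ 2) (sq_nonneg _) * v i) := by
  refine Measure.ext_of_charFun (funext fun t => ?_)
  have hexp : ∀ z : ι → ℝ, cexp (t * (∑ i, c i * z i : ℝ) * I)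
      = ∏ i, cexp ((t * c i : ℝ) * z i * I) := by
    intro z
    rw [← Complex.exp_sum]
    push_cast
    rw [Finset.mul_sum, Finset.sum_mul]
    exact congrArg cexp (Finset.sum_congr rfl fun i _ => by ring)
  have hmeas : Measurable fun z : ι → ℝ => ∑ i, c i * z i := by fun_prop
  rw [charFun_apply_real, integral_map hmeas.aemeasurable (by fun_prop)]
  simp_rw [hexp]
  rw [integral_fintype_prod_eq_prod (fun i (x : ℝ) => cexp ((t * c i : ℝ) * x * I))]
  simp_rw [← charFun_apply_real, charFun_gaussianReal, ← Complex.exp_sum]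
  congr 1
  push_cast
  rw [Finset.mul_sum, Finset.sum_mul, Finset.sum_mul, Finset.sum_div, ← Finset.sum_sub_distrib]
  exact Finset.sum_congr rfl fun i _ => by ring

lemma map_pi_gaussianReal_sum_mul_sub {ι : Type*} [Fintype ι] (x Δ : ι → ℝ) (v : ℝ≥0) :
    (Measure.pi fun i => gaussianReal (x i + Δ i) v).map (fun z => ∑ i, Δ i * (z i - x i))
      = gaussianReal (∑ i, Δ i ^ 2) (.mk (∑ i, Δ i ^ 2) (by positivity) * v) := by
  have hsplit : (fun z : ι → ℝ => ∑ i, Δ i * (z i - x i))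
      = (· - ∑ i, Δ i * x i) ∘ fun z => ∑ i, Δ i * z i := by
    funext z
    simp only [Function.comp_apply, mul_sub, Finset.sum_sub_distrib]
  rw [hsplit, ← Measure.map_map (measurable_sub_const _) (by fun_prop),
    map_pi_gaussianReal_sum_mul, gaussianReal_map_sub_const]
  congr 1
  · simp only [mul_add, Finset.sum_add_distrib, add_sub_cancel_left, sq]
  · ext
    simp [Finset.sum_mul]

lemma pi_gaussianReal_setOf_mul_exp_le_toReal {ι : Type*} [Fintype ι] {x Δ : ι → ℝ} {σ r : ℝ}
    (hσ : 0 < σ) (hr : r ^ 2 = ∑ i, Δ i ^ 2) (hr0 : 0 < r) {g t : ℝ} (hg : 0 < g) (ht : 0 < t) :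
    ((Measure.pi fun i => gaussianReal (x i + Δ i) (.mk (σ ^ 2) (sq_nonneg σ)))
        {z | g * exp ((∑ i, Δ i * (z i - x i)) / σ ^ 2 - r ^ 2 / (2 * σ ^ 2)) ≤ t}).toReal
      = stdNormalCDF ((r ^ 2 / 2 + σ ^ 2 * (log t - log g)) / (σ * r) - r / σ) := by
  have hset : {z : ι → ℝ | g * exp ((∑ i, Δ i * (z i - x i)) / σ ^ 2 - r ^ 2 / (2 * σ ^ 2)) ≤ t}
      = (fun z => ∑ i, Δ i * (z i - x i)) ⁻¹' Iic (σ ^ 2 * (log t - log g) + r ^ 2 / 2) := by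
    ext z
    rw [mem_ofPred_eq, mem_preimage, mem_Iic, mul_exp_le_iff_le_log_sub hg ht, sub_le_iff_le_add,
      div_le_iff₀ (by positivity)]
    field_simp
  have hvar : (.mk (∑ i, Δ i ^ 2) (by positivity) * NNReal.mk (σ ^ 2) (sq_nonneg σ) : ℝ≥0)
      = .mk ((σ * r) ^ 2) (sq_nonneg _) := by
    ext
    simp only [NNReal.coe_mul, NNReal.coe_mk, ← hr]
    ring
  rw [hset, ← Measure.map_apply (by fun_prop) measurableSet_Iic, map_pi_gaussianReal_sum_mul_sub,
    hvar, ← hr, gaussianReal_Iic_toReal_eq_stdNormalCDF (mul_pos hσ hr0)]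
  congr 1
  field_simp
  ring

theorem hybrid_adversarial_evaluation_general
    {S : Type*} [Countable S] [MeasurableSpace S] [MeasurableSingletonClass S]
    (p₁ q₁ : S → ℝ)
    (hq₁nn : ∀ z, 0 ≤ q₁ z)
    (hsupp : ∀ z, 0 < p₁ z ↔ 0 < q₁ z)
    (γ₁ : S → ℝ)
    (hγ₁pos : ∀ z, 0 < p₁ z → 0 < γ₁ z)
    (D : ℕ) (σ : ℝ) (hσ : 0 < σ)
    (x₂ Δ : Fin D → ℝ)
    (r : ℝ) (hr : r = Real.sqrt (∑ i, Δ i ^ 2)) (hr0 : 0 < r)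
    (v : Measure (S × (Fin D → ℝ)))
    (hv : v = (discreteMeasure q₁).prod
      (Measure.pi (fun i => gaussianReal (x₂ i + Δ i) ⟨σ ^ 2, sq_nonneg σ⟩)))
    (t : ℝ) (ht : 0 < t) :
    (v {q : S × (Fin D → ℝ) |
        γ₁ q.1 * Real.exp ((∑ i, Δ i * (q.2 i - x₂ i)) / σ ^ 2 - r ^ 2 / (2 * σ ^ 2))
          ≤ t}).toReal
      = ∑' z₁, q₁ z₁ *
          stdNormalCDF
            ((r ^ 2 / 2 + σ ^ 2 * (Real.log t - Real.log (γ₁ z₁))) / (σ * r) - r / σ) := by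
  have hr2 : r ^ 2 = ∑ i, Δ i ^ 2 := by rw [hr, sq_sqrt (by positivity)]
  have hmeas : MeasurableSet {q : S × (Fin D → ℝ) |
      γ₁ q.1 * exp ((∑ i, Δ i * (q.2 i - x₂ i)) / σ ^ 2 - r ^ 2 / (2 * σ ^ 2)) ≤ t} :=
    measurableSet_le (((measurable_of_countable γ₁).comp measurable_fst).mul (by fun_prop))
      measurable_const
  -- `⟨σ ^ 2, _⟩` elaborates at the subtype, not at `ℝ≥0`, so instance search misses this one.
  have : IsProbabilityMeasure (Measure.pi fun i => gaussianReal (x₂ i + Δ i) ⟨σ ^ 2, sq_nonneg σ⟩) :=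
    inferInstanceAs (IsProbabilityMeasure
      (Measure.pi fun i => gaussianReal (x₂ i + Δ i) (.mk (σ ^ 2) (sq_nonneg σ))))
  rw [hv, discreteMeasure_prod_apply_toReal hq₁nn _ hmeas]
  refine tsum_congr fun z => ?_
  rcases (hq₁nn z).eq_or_lt with hz | hz
  · rw [← hz, zero_mul, zero_mul]
  · exact congrArg (q₁ z * ·) (pi_gaussianReal_setOf_mul_exp_le_toReal hσ hr2 hr0
      (hγ₁pos z ((hsupp z).2 hz)) ht)

/-- **Adversarial-side evaluation identity of hybrid randomized smoothing.**
Under the adversarial smoothing distribution `v = q₁ ⊗ N(x₂+Δ, σ²I_D)`, the joint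
likelihood ratio `γ(z₁,z₂) = (q₁/p₁)(z₁)·exp(σ⁻²Δᵀ(z₂−x₂) − r²/(2σ²))` satisfies
`v({γ ≤ t}) = Σ_{z₁} q₁(z₁)·Φ((r²/2 + σ²(log t − log γ₁(z₁)))/(σr) − r/σ)`. -/
theorem hybrid_adversarial_evaluation
    {S : Type*} [Countable S] [MeasurableSpace S] [MeasurableSingletonClass S]
    (p₁ q₁ : S → ℝ)
    (hp₁nn : ∀ z, 0 ≤ p₁ z) (hp₁sum : ∑' z, p₁ z = 1)
    (hq₁nn : ∀ z, 0 ≤ q₁ z) (hq₁sum : ∑' z, q₁ z = 1)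
    (hsupp : ∀ z, 0 < p₁ z ↔ 0 < q₁ z)
    (γ₁ : S → ℝ) (hγ₁def : γ₁ = fun z => q₁ z / p₁ z)
    (hγ₁pos : ∀ z, 0 < p₁ z → 0 < γ₁ z)
    (D : ℕ) (hD : 1 ≤ D) (σ : ℝ) (hσ : 0 < σ)
    (x₂ Δ : Fin D → ℝ)
    (r : ℝ) (hr : r = Real.sqrt (∑ i, Δ i ^ 2)) (hr0 : 0 < r)
    (v : Measure (S × (Fin D → ℝ)))
    (hv : v = (discreteMeasure q₁).prod
      (Measure.pi (fun i => gaussianReal (x₂ i + Δ i) ⟨σ ^ 2, sq_nonneg σ⟩)))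
    (t : ℝ) (ht : 0 < t) :
    (v {q : S × (Fin D → ℝ) |
        γ₁ q.1 * Real.exp ((∑ i, Δ i * (q.2 i - x₂ i)) / σ ^ 2 - r ^ 2 / (2 * σ ^ 2))
          ≤ t}).toReal
      = ∑' z₁, q₁ z₁ *
          stdNormalCDF
            ((r ^ 2 / 2 + σ ^ 2 * (Real.log t - Real.log (γ₁ z₁))) / (σ * r) - r / σ) :=
  hybrid_adversarial_evaluation_general p₁ q₁ hq₁nn hsupp γ₁ hγ₁pos D σ hσ x₂ Δ r hr hr0 v hv t ht
end

section
/- Let X and Y be nonnegative integrable random variables with E[X] = E[Y], and suppose X ≤_cx Y, i.e., E[φ(X)] ≤ E[φ(Y)] for every convex function φ : ℝ → ℝ for which both expectations exist and are finite. Then for every p ∈ (0,1), ∫₀ᵖ Q_X(u) du ≥ ∫₀ᵖ Q_Y(u) du, where Q_X(p) = inf{t ∈ ℝ : P(X ≤ t) ≥ p} denotes the left-continuous quantile function. -/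
/-!
Under Lebesgue measure on `(0,1)` the quantile function `Q_μ` has law `μ`, so expectations
against `μ` become integrals of `Q_μ` over `(0,1)`. For `t = Q_Y(p)` the function `Q_Y - t` is
`≤ 0` on `(0,p]` and `≥ 0` on `(p,1)`, so `E(Y - t)⁺ = ∫_p^1 (Q_Y - t)`, whereas always
`E(X - t)⁺ ≥ ∫_p^1 (Q_X - t)`. Since `x ↦ (x - t)⁺` is convex, `E(X - t)⁺ ≤ E(Y - t)⁺`, whence
`∫_p^1 Q_X ≤ ∫_p^1 Q_Y`; subtracting from the equal means `∫_0^1 Q_X = ∫_0^1 Q_Y` gives the claim.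
-/

open MeasureTheory ProbabilityTheory Set Filter

namespace ProbabilityTheory

/-- Meaningful only for `u ∈ (0,1)`: otherwise the set is empty or unbounded below and `sInf`
returns `0`. -/
noncomputable def quantile (μ : Measure ℝ) (u : ℝ) : ℝ := sInf {t | u ≤ cdf μ t}

section Quantile

variable (μ : Measure ℝ)

lemma nonempty_setOf_le_cdf {u : ℝ} (hu : u < 1) : {t | u ≤ cdf μ t}.Nonempty :=
  ((tendsto_cdf_atTop μ).eventually (eventually_ge_nhds hu)).exists

lemma bddBelow_setOf_le_cdf {u : ℝ} (hu : 0 < u) : BddBelow {t | u ≤ cdf μ t} := by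
  obtain ⟨s, hs⟩ := eventually_atBot.1 ((tendsto_cdf_atBot μ).eventually (eventually_lt_nhds hu))
  exact ⟨s, fun t ht => le_of_not_ge fun hts => (hs t hts).not_ge ht⟩

lemma le_cdf_quantile {u : ℝ} (hu : u < 1) : u ≤ cdf μ (quantile μ u) := by
  refine ge_of_tendsto (((cdf μ).right_continuous _).mono Ioi_subset_Ici_self) ?_
  filter_upwards [self_mem_nhdsWithin] with s hs
  obtain ⟨x, hx, hxs⟩ := exists_lt_of_csInf_lt (nonempty_setOf_le_cdf μ hu) hs
  exact hx.trans (monotone_cdf μ hxs.le)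

lemma quantile_le_iff {u : ℝ} (hu : u ∈ Ioo 0 1) (t : ℝ) : quantile μ u ≤ t ↔ u ≤ cdf μ t :=
  ⟨fun h => (le_cdf_quantile μ hu.2).trans (monotone_cdf μ h),
    fun h => csInf_le (bddBelow_setOf_le_cdf μ hu.1) h⟩

lemma monotoneOn_quantile : MonotoneOn (quantile μ) (Ioo 0 1) :=
  fun _ hu _ hv huv => (quantile_le_iff μ hu _).2 (huv.trans (le_cdf_quantile μ hv.2))

lemma aemeasurable_quantile : AEMeasurable (quantile μ) (volume.restrict (Ioo 0 1)) :=
  aemeasurable_restrict_of_monotoneOn measurableSet_Ioo (monotoneOn_quantile μ)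

lemma volume_Ioo_zero_one_inter_Iic {c : ℝ} (hc : c ≤ 1) :
    volume (Ioo 0 1 ∩ Iic c) = ENNReal.ofReal c := by
  refine le_antisymm ?_ ?_
  · calc volume (Ioo 0 1 ∩ Iic c) ≤ volume (Icc 0 c) :=
          measure_mono fun u hu => ⟨hu.1.1.le, hu.2⟩
      _ = ENNReal.ofReal c := by rw [Real.volume_Icc, sub_zero]
  · calc ENNReal.ofReal c = volume (Ioo 0 c) := by rw [Real.volume_Ioo, sub_zero]
      _ ≤ volume (Ioo 0 1 ∩ Iic c) :=
          measure_mono fun u hu => ⟨⟨hu.1, hu.2.trans_le hc⟩, hu.2.le⟩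

variable [IsProbabilityMeasure μ]

lemma map_quantile_volume : (volume.restrict (Ioo 0 1)).map (quantile μ) = μ := by
  refine (Measure.ext_of_Iic μ _ fun t => ?_).symm
  have hpre : quantile μ ⁻¹' Iic t ∩ Ioo 0 1 = Ioo 0 1 ∩ Iic (cdf μ t) := by
    ext u
    simp only [mem_inter_iff, mem_preimage, mem_Iic]
    exact ⟨fun ⟨h, hu⟩ => ⟨hu, (quantile_le_iff μ hu t).1 h⟩,
      fun ⟨hu, h⟩ => ⟨(quantile_le_iff μ hu t).2 h, hu⟩⟩
  rw [Measure.map_apply_of_aemeasurable (aemeasurable_quantile μ) measurableSet_Iic,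
    Measure.restrict_apply' measurableSet_Ioo, hpre,
    volume_Ioo_zero_one_inter_Iic (cdf_le_one μ t), ofReal_cdf]

variable {μ}

lemma integral_comp_quantile {g : ℝ → ℝ} (hg : AEStronglyMeasurable g μ) :
    ∫ u in Ioo 0 1, g (quantile μ u) = ∫ x, g x ∂μ := by
  rw [← integral_map (aemeasurable_quantile μ) (by rwa [map_quantile_volume]),
    map_quantile_volume]

lemma integrableOn_comp_quantile {g : ℝ → ℝ} (hg : Integrable g μ) :
    IntegrableOn (fun u => g (quantile μ u)) (Ioo 0 1) := by
  rw [← map_quantile_volume μ] at hg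
  exact (integrable_map_measure hg.aestronglyMeasurable (aemeasurable_quantile μ)).1 hg

end Quantile

section StopLoss

variable {μ : Measure ℝ} [IsProbabilityMeasure μ] {p : ℝ}

lemma setIntegral_Ioo_quantile_sub (hμ : Integrable (fun x => x) μ) (hp : p ∈ Icc 0 1)
    (t : ℝ) :
    ∫ u in Ioo p 1, (quantile μ u - t) = (∫ u in Ioo p 1, quantile μ u) - (1 - p) * t := by
  have hQ : IntegrableOn (quantile μ) (Ioo p 1) :=
    (integrableOn_comp_quantile hμ).mono_set (Ioo_subset_Ioo_left hp.1)
  rw [integral_sub hQ (integrableOn_const (by simp [Real.volume_Ioo])), setIntegral_const,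
    measureReal_def, Real.volume_Ioo, ENNReal.toReal_ofReal (sub_nonneg.2 hp.2), smul_eq_mul]

lemma setIntegral_Ioo_quantile_sub_le (hμ : Integrable (fun x => x) μ) (hp : 0 ≤ p) (t : ℝ) :
    ∫ u in Ioo p 1, (quantile μ u - t) ≤ ∫ x, max (x - t) 0 ∂μ := by
  have hint := integrableOn_comp_quantile (hμ.sub (integrable_const t)).pos_part
  calc ∫ u in Ioo p 1, (quantile μ u - t)
      ≤ ∫ u in Ioo p 1, max (quantile μ u - t) 0 :=
        setIntegral_mono_on (((integrableOn_comp_quantile hμ).sub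
            (integrableOn_const (by simp [Real.volume_Ioo]))).mono_set (Ioo_subset_Ioo_left hp))
          (hint.mono_set (Ioo_subset_Ioo_left hp)) measurableSet_Ioo fun _ _ => le_max_left _ _
    _ ≤ ∫ u in Ioo 0 1, max (quantile μ u - t) 0 :=
        setIntegral_mono_set hint (Eventually.of_forall fun _ => le_max_right _ _)
          (Ioo_subset_Ioo_left hp).eventuallyLE
    _ = ∫ x, max (x - t) 0 ∂μ :=
        integral_comp_quantile (g := fun x => max (x - t) 0) (by fun_prop)

lemma integral_max_sub_quantile (hp : p ∈ Ioo 0 1) :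
    ∫ x, max (x - quantile μ p) 0 ∂μ = ∫ u in Ioo p 1, (quantile μ u - quantile μ p) := by
  set t := quantile μ p
  calc ∫ x, max (x - t) 0 ∂μ = ∫ u in Ioo 0 1, max (quantile μ u - t) 0 :=
        (integral_comp_quantile (g := fun x => max (x - t) 0) (by fun_prop)).symm
    _ = ∫ u in Ioo p 1, max (quantile μ u - t) 0 :=
        setIntegral_eq_of_subset_of_forall_sdiff_eq_zero measurableSet_Ioo
          (Ioo_subset_Ioo_left hp.1.le) fun u hu => max_eq_right <| sub_nonpos.2 <|
            monotoneOn_quantile μ hu.1 hp (not_lt.1 fun h => hu.2 ⟨h, hu.1.2⟩)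
    _ = ∫ u in Ioo p 1, (quantile μ u - t) :=
        setIntegral_congr_fun measurableSet_Ioo fun u hu => max_eq_left <| sub_nonneg.2 <|
          monotoneOn_quantile μ hp ⟨hp.1.trans hu.1, hu.2⟩ hu.1.le

lemma intervalIntegral_quantile (hμ : Integrable (fun x => x) μ) (hp : p ∈ Ioo 0 1) :
    ∫ u in 0..p, quantile μ u = ∫ x, x ∂μ - ∫ u in Ioo p 1, quantile μ u := by
  have hQ := integrableOn_comp_quantile hμ
  rw [intervalIntegral.integral_of_le hp.1.le, eq_sub_iff_add_eq,
    ← setIntegral_union (Ioc_disjoint_Ioi_same.mono_right Ioo_subset_Ioi_self) measurableSet_Ioo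
      (hQ.mono_set fun u hu => ⟨hu.1, hu.2.trans_lt hp.2⟩)
      (hQ.mono_set (Ioo_subset_Ioo_left hp.1.le)),
    Ioc_union_Ioo_eq_Ioo hp.1.le hp.2]
  exact integral_comp_quantile (g := fun x => x) aestronglyMeasurable_id

variable {ν : Measure ℝ} [IsProbabilityMeasure ν]

lemma setIntegral_Ioo_quantile_le (hμ : Integrable (fun x => x) μ)
    (hν : Integrable (fun x => x) ν) (hp : p ∈ Ioo 0 1)
    (h : ∫ x, max (x - quantile ν p) 0 ∂μ ≤ ∫ x, max (x - quantile ν p) 0 ∂ν) :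
    ∫ u in Ioo p 1, quantile μ u ≤ ∫ u in Ioo p 1, quantile ν u := by
  have hμp := setIntegral_Ioo_quantile_sub_le hμ hp.1.le (quantile ν p)
  have hνp := integral_max_sub_quantile (μ := ν) hp
  rw [setIntegral_Ioo_quantile_sub hμ (Ioo_subset_Icc_self hp)] at hμp
  rw [setIntegral_Ioo_quantile_sub hν (Ioo_subset_Icc_self hp)] at hνp
  linarith

lemma intervalIntegral_quantile_le (hμ : Integrable (fun x => x) μ)
    (hν : Integrable (fun x => x) ν) (hmean : ∫ x, x ∂μ = ∫ x, x ∂ν) (hp : p ∈ Ioo 0 1)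
    (h : ∫ x, max (x - quantile ν p) 0 ∂μ ≤ ∫ x, max (x - quantile ν p) 0 ∂ν) :
    ∫ u in 0..p, quantile ν u ≤ ∫ u in 0..p, quantile μ u := by
  rw [intervalIntegral_quantile hν hp, intervalIntegral_quantile hμ hp, hmean]
  exact sub_le_sub_left (setIntegral_Ioo_quantile_le hμ hν hp h) _

end StopLoss

lemma cdf_map {Ω : Type*} [MeasurableSpace Ω] {P : Measure Ω} [IsProbabilityMeasure P]
    {X : Ω → ℝ} (hX : AEMeasurable X P) (t : ℝ) :
    cdf (P.map X) t = (P {ω | X ω ≤ t}).toReal := by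
  have := Measure.isProbabilityMeasure_map hX
  rw [cdf_eq_real, measureReal_def, Measure.map_apply_of_aemeasurable hX measurableSet_Iic]
  rfl

end ProbabilityTheory

theorem convex_order_implies_lorenz_order_general
    {Ω : Type*} [MeasurableSpace Ω] (P : Measure Ω) [IsProbabilityMeasure P]
    (X Y : Ω → ℝ)
    (hXint : Integrable X P) (hYint : Integrable Y P)
    (hmean : ∫ ω, X ω ∂P = ∫ ω, Y ω ∂P)
    (hcx : ∀ φ : ℝ → ℝ, ConvexOn ℝ Set.univ φ →
      Integrable (fun ω => φ (X ω)) P → Integrable (fun ω => φ (Y ω)) P →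
      ∫ ω, φ (X ω) ∂P ≤ ∫ ω, φ (Y ω) ∂P)
    (QX QY : ℝ → ℝ)
    (hQX : QX = fun p => sInf {t : ℝ | p ≤ (P {ω | X ω ≤ t}).toReal})
    (hQY : QY = fun p => sInf {t : ℝ | p ≤ (P {ω | Y ω ≤ t}).toReal}) :
    ∀ p ∈ Set.Ioo (0 : ℝ) 1,
      ∫ u in (0 : ℝ)..p, QY u ≤ ∫ u in (0 : ℝ)..p, QX u := by
  intro p hp
  have hXm := hXint.aemeasurable
  have hYm := hYint.aemeasurable
  have := Measure.isProbabilityMeasure_map hXm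
  have := Measure.isProbabilityMeasure_map hYm
  have hQX' : QX = quantile (P.map X) := by
    funext u; simp only [hQX, quantile, cdf_map hXm]
  have hQY' : QY = quantile (P.map Y) := by
    funext u; simp only [hQY, quantile, cdf_map hYm]
  have hstopLoss (t : ℝ) :
      ∫ x, max (x - t) 0 ∂P.map X ≤ ∫ x, max (x - t) 0 ∂P.map Y := by
    have hconv : ConvexOn ℝ univ fun x : ℝ => max (x - t) 0 :=
      ((convexOn_id convex_univ).sub (concaveOn_const t convex_univ)).sup
        (convexOn_const 0 convex_univ)
    rw [integral_map hXm (by fun_prop), integral_map hYm (by fun_prop)]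
    exact hcx _ hconv (hXint.sub (integrable_const t)).pos_part
      (hYint.sub (integrable_const t)).pos_part
  rw [hQX', hQY']
  refine intervalIntegral_quantile_le ?_ ?_ ?_ hp (hstopLoss _)
  · exact (integrable_map_measure aestronglyMeasurable_id hXm).2 hXint
  · exact (integrable_map_measure aestronglyMeasurable_id hYm).2 hYint
  · rwa [integral_map (f := fun x => x) hXm aestronglyMeasurable_id,
      integral_map (f := fun x => x) hYm aestronglyMeasurable_id]

/-- **Convex order implies Lorenz order** (Shaked–Shanthikumar, Theorem 3.A.10).
If `X, Y ≥ 0` are integrable with `E[X] = E[Y]` and `X ≤_cx Y`, then for every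
`p ∈ (0,1)`, `∫₀ᵖ Q_X(u) du ≥ ∫₀ᵖ Q_Y(u) du`, where `Q_X(p) = inf {t | P(X ≤ t) ≥ p}`
is the left-continuous quantile function. -/
theorem convex_order_implies_lorenz_order
    {Ω : Type*} [MeasurableSpace Ω] (P : Measure Ω) [IsProbabilityMeasure P]
    (X Y : Ω → ℝ)
    (hXnn : ∀ ω, 0 ≤ X ω) (hYnn : ∀ ω, 0 ≤ Y ω)
    (hXint : Integrable X P) (hYint : Integrable Y P)
    (hmean : ∫ ω, X ω ∂P = ∫ ω, Y ω ∂P)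
    (hcx : ∀ φ : ℝ → ℝ, ConvexOn ℝ Set.univ φ →
      Integrable (fun ω => φ (X ω)) P → Integrable (fun ω => φ (Y ω)) P →
      ∫ ω, φ (X ω) ∂P ≤ ∫ ω, φ (Y ω) ∂P)
    (QX QY : ℝ → ℝ)
    (hQX : QX = fun p => sInf {t : ℝ | p ≤ (P {ω | X ω ≤ t}).toReal})
    (hQY : QY = fun p => sInf {t : ℝ | p ≤ (P {ω | Y ω ≤ t}).toReal}) :
    ∀ p ∈ Set.Ioo (0 : ℝ) 1,
      ∫ u in (0 : ℝ)..p, QY u ≤ ∫ u in (0 : ℝ)..p, QX u :=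
  convex_order_implies_lorenz_order_general P X Y hXint hYint hmean hcx QX QY hQX hQY
end

section
/- Fix σ > 0, δ ≥ 0, and p_A ∈ (0,1). Let μ = N(0, σ²) and ν = N(δ, σ²) be one-dimensional Gaussian measures, and let Φ be the standard normal CDF with inverse Φ⁻¹. Then every measurable function h : ℝ → [0,1] with ∫ h dμ = p_A satisfies ∫ h dν ≥ Φ(Φ⁻¹(p_A) − δ/σ), and equality is attained by the half-line indicator h*(x) = 1{x ≤ σ·Φ⁻¹(p_A)}. -/
/-!
Neyman–Pearson: the likelihood ratio of `N(δ, σ²)` to `N(0, σ²)` is increasing for `δ ≥ 0`, so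
the half-line `{x ≤ t}` is a sublevel set `{g ≤ c f}` of it, with `c = g t / f t`. For any test
`h` with values in `[0, 1]`, `(h - 1_{x ≤ t}) (g - c f) ≥ 0` pointwise; integrating, and using
that `h` and the half-line have the same `N(0, σ²)`-mass, gives `∫ h dν ≥ ν (Iic t)`.
Standardizing, `ν (Iic t) = Φ ((t - δ) / σ)`, and `Φ (Φ⁻¹ p) = p` because `Φ` is continuous.
-/

open MeasureTheory ProbabilityTheory

/-- The inverse of the standard normal CDF (as a generalized inverse). -/
noncomputable def stdNormalCDFInv (p : ℝ) : ℝ :=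
  sInf {x : ℝ | p ≤ stdNormalCDF x}

open Filter Set Topology
open scoped NNReal

lemma continuous_cdf (μ : Measure ℝ) [IsProbabilityMeasure μ] [NullSingletonClass μ] :
    Continuous (cdf μ) := by
  refine continuous_iff_continuousAt.2 fun a => ?_
  have h_atom : (cdf μ).measure {a} = 0 := by rw [measure_cdf]; exact measure_singleton a
  rw [StieltjesFunction.measure_singleton, ENNReal.ofReal_eq_zero, sub_nonpos] at h_atom
  rw [(monotone_cdf μ).continuousAt_iff_leftLim_eq_rightLim, StieltjesFunction.rightLim_eq]
  exact le_antisymm ((monotone_cdf μ).leftLim_le le_rfl) h_atom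

lemma apply_sInf_setOf_le_apply_eq {f : ℝ → ℝ} {a b p : ℝ} (hf : Continuous f)
    (h_bot : Tendsto f atBot (𝓝 a)) (h_top : Tendsto f atTop (𝓝 b)) (hap : a < p) (hpb : p < b) :
    f (sInf {x | p ≤ f x}) = p := by
  set S := {x | p ≤ f x}
  obtain ⟨x₀, hx₀⟩ := (h_bot.eventually (eventually_lt_nhds hap)).exists_forall_of_atBot
  have hS_bdd : BddBelow S := ⟨x₀, fun x hx => le_of_not_gt fun hlt => (hx₀ x hlt.le).not_ge hx⟩
  have hS_ne : S.Nonempty := (h_top.eventually (eventually_ge_nhds hpb)).exists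
  have hS_closed : IsClosed S := isClosed_le continuous_const hf
  refine le_antisymm ?_ (hS_closed.csInf_mem hS_ne hS_bdd)
  have h_below : ∀ x ∈ Iio (sInf S), f x ≤ p := fun x hx =>
    le_of_not_ge fun hpx => (csInf_le hS_bdd hpx).not_gt hx
  exact le_of_tendsto (hf.continuousAt.tendsto.mono_left nhdsWithin_le_nhds)
    (eventually_nhdsWithin_of_forall h_below)

lemma stdNormalCDF_eq_cdf : stdNormalCDF = cdf (gaussianReal 0 1) := by
  ext t; rw [cdf_eq_real, measureReal_def, stdNormalCDF]

lemma stdNormalCDF_stdNormalCDFInv {p : ℝ} (hp : p ∈ Ioo (0 : ℝ) 1) :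
    stdNormalCDF (stdNormalCDFInv p) = p := by
  have : NullSingletonClass (gaussianReal 0 1) := nullSingletonClass_gaussianReal one_ne_zero
  rw [stdNormalCDFInv, stdNormalCDF_eq_cdf]
  exact apply_sInf_setOf_le_apply_eq (continuous_cdf _) (tendsto_cdf_atBot _)
    (tendsto_cdf_atTop _) hp.1 hp.2

lemma gaussianReal_Iic_eq_stdNormalCDF (m : ℝ) {σ : ℝ} (hσ : 0 < σ) (t : ℝ) :
    (gaussianReal m ⟨σ ^ 2, sq_nonneg σ⟩).real (Iic t) = stdNormalCDF ((t - m) / σ) := by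
  have h_affine :
      (gaussianReal 0 1).map (fun x => σ * x + m) = gaussianReal m ⟨σ ^ 2, sq_nonneg σ⟩ := by
    rw [show (fun x => σ * x + m) = (· + m) ∘ (σ * ·) from rfl,
      ← Measure.map_map (measurable_add_const m) (measurable_const_mul σ),
      gaussianReal_map_const_mul, gaussianReal_map_add_const]
    congr 1
    · simp
    · ext; simp; rfl
  have h_preimage : (fun x => σ * x + m) ⁻¹' Iic t = Iic ((t - m) / σ) := by
    ext x; simp [le_div_iff₀ hσ, le_sub_iff_add_le, mul_comm]
  rw [← h_affine, measureReal_def, Measure.map_apply (by fun_prop) measurableSet_Iic,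
    h_preimage, stdNormalCDF]

lemma gaussianPDFReal_mul_gaussianPDFReal_le {m₁ m₂ : ℝ} (hm : m₁ ≤ m₂) (v : ℝ≥0) {x y : ℝ}
    (hxy : x ≤ y) :
    gaussianPDFReal m₂ v x * gaussianPDFReal m₁ v y ≤
      gaussianPDFReal m₂ v y * gaussianPDFReal m₁ v x := by
  simp only [gaussianPDFReal]
  rw [mul_mul_mul_comm, mul_mul_mul_comm _ (Real.exp _), ← Real.exp_add, ← Real.exp_add]
  gcongr ?_ * Real.exp ?_
  rw [← add_div, ← add_div]
  gcongr ?_ / _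
  nlinarith [mul_nonneg (sub_nonneg.2 hm) (sub_nonneg.2 hxy)]

/-- The Neyman–Pearson lemma: `s` is the region where the likelihood ratio `g / f` is at most `c`. -/
lemma setIntegral_le_integral_mul_of_threshold {α : Type*} [MeasurableSpace α] {ρ : Measure α}
    {f g h : α → ℝ} {s : Set α} {c : ℝ} (hs : MeasurableSet s) (hf : Integrable f ρ)
    (hg : Integrable g ρ) (hh : AEStronglyMeasurable h ρ) (h01 : ∀ x, h x ∈ Icc (0 : ℝ) 1)
    (h_in : ∀ x ∈ s, g x ≤ c * f x) (h_out : ∀ x ∉ s, c * f x ≤ g x)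
    (hfh : ∫ x, f x * h x ∂ρ = ∫ x in s, f x ∂ρ) :
    ∫ x in s, g x ∂ρ ≤ ∫ x, g x * h x ∂ρ := by
  set k := fun x => g x - c * f x
  have hk : Integrable k ρ := hg.sub (hf.const_mul c)
  have h_bdd : ∀ᵐ x ∂ρ, ‖h x‖ ≤ 1 := ae_of_all _ fun x => by
    rw [Real.norm_eq_abs, abs_of_nonneg (h01 x).1]; exact (h01 x).2
  have hkh : Integrable (fun x => k x * h x) ρ := hk.mul_bdd hh h_bdd
  have h_pt : ∀ x, s.indicator k x ≤ k x * h x := by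
    intro x
    by_cases hx : x ∈ s
    · rw [indicator_of_mem hx]
      nlinarith [h_in x hx, (h01 x).2]
    · rw [indicator_of_notMem hx]
      exact mul_nonneg (sub_nonneg.2 (h_out x hx)) (h01 x).1
  have h_int := integral_mono (hk.indicator hs) hkh h_pt
  rw [integral_indicator hs, integral_sub hg.restrict (hf.const_mul c).restrict,
    integral_const_mul] at h_int
  simp only [k, sub_mul, mul_assoc] at h_int
  rw [integral_sub (hg.mul_bdd hh h_bdd) ((hf.mul_bdd hh h_bdd).const_mul c), integral_const_mul,
    hfh] at h_int
  linarith

lemma gaussianReal_real_eq_setIntegral (m : ℝ) {v : ℝ≥0} (hv : v ≠ 0) (s : Set ℝ) :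
    (gaussianReal m v).real s = ∫ x in s, gaussianPDFReal m v x := by
  rw [measureReal_def, gaussianReal_apply_eq_integral m hv, ENNReal.toReal_ofReal
    (setIntegral_nonneg_of_ae (ae_of_all _ fun x => gaussianPDFReal_nonneg m v x))]

/-- Half-lines are the most powerful tests for a Gaussian location shift. -/
lemma gaussianReal_real_Iic_le_integral {m₁ m₂ : ℝ} (hm : m₁ ≤ m₂) {v : ℝ≥0} (hv : v ≠ 0)
    {h : ℝ → ℝ} (hh : Measurable h) (h01 : ∀ x, h x ∈ Icc (0 : ℝ) 1) (t : ℝ)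
    (h_size : ∫ x, h x ∂gaussianReal m₁ v = (gaussianReal m₁ v).real (Iic t)) :
    (gaussianReal m₂ v).real (Iic t) ≤ ∫ x, h x ∂gaussianReal m₂ v := by
  set f := gaussianPDFReal m₁ v
  set g := gaussianPDFReal m₂ v
  have hft : 0 < f t := gaussianPDFReal_pos m₁ v t hv
  rw [gaussianReal_real_eq_setIntegral m₁ hv, integral_gaussianReal_eq_integral_smul hv] at h_size
  rw [gaussianReal_real_eq_setIntegral m₂ hv, integral_gaussianReal_eq_integral_smul hv]
  refine setIntegral_le_integral_mul_of_threshold (c := g t / f t) measurableSet_Iic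
    (integrable_gaussianPDFReal m₁ v) (integrable_gaussianPDFReal m₂ v) hh.aestronglyMeasurable
    h01 (fun x hx => ?_) (fun x hx => ?_) h_size
  · rw [div_mul_eq_mul_div, le_div_iff₀ hft]
    exact gaussianPDFReal_mul_gaussianPDFReal_le hm v hx
  · rw [div_mul_eq_mul_div, div_le_iff₀ hft]
    exact gaussianPDFReal_mul_gaussianPDFReal_le hm v (not_le.1 hx).le

/-- **Classical Gaussian randomized smoothing certificate** (Cohen et al.).
For `μ = N(0,σ²)` and `ν = N(δ,σ²)`, every measurable `h : ℝ → [0,1]` with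
`∫ h dμ = p_A` satisfies `∫ h dν ≥ Φ(Φ⁻¹(p_A) − δ/σ)`, with equality attained by the
half-line indicator `h* = 1{x ≤ σ·Φ⁻¹(p_A)}`. -/
theorem gaussian_randomized_smoothing_certificate
    (σ δ pA : ℝ) (hσ : 0 < σ) (hδ : 0 ≤ δ) (hpA : pA ∈ Set.Ioo (0 : ℝ) 1)
    (μ ν : Measure ℝ)
    (hμ : μ = gaussianReal 0 ⟨σ ^ 2, sq_nonneg σ⟩)
    (hν : ν = gaussianReal δ ⟨σ ^ 2, sq_nonneg σ⟩) :
    (∀ h : ℝ → ℝ, Measurable h → (∀ x, h x ∈ Set.Icc (0 : ℝ) 1) →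
      (∫ x, h x ∂μ = pA) →
      stdNormalCDF (stdNormalCDFInv pA - δ / σ) ≤ ∫ x, h x ∂ν) ∧
      ∫ x, Set.indicator (Set.Iic (σ * stdNormalCDFInv pA)) (fun _ => (1 : ℝ)) x ∂ν
        = stdNormalCDF (stdNormalCDFInv pA - δ / σ) := by
  subst hμ hν
  have hv : (⟨σ ^ 2, sq_nonneg σ⟩ : ℝ≥0) ≠ 0 :=
    (NNReal.coe_pos.1 (show (0 : ℝ) < (⟨σ ^ 2, sq_nonneg σ⟩ : ℝ≥0) by positivity)).ne'
  set t := σ * stdNormalCDFInv pA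
  have h_size : (gaussianReal 0 ⟨σ ^ 2, sq_nonneg σ⟩).real (Iic t) = pA := by
    rw [gaussianReal_Iic_eq_stdNormalCDF 0 hσ, sub_zero, mul_div_cancel_left₀ _ hσ.ne',
      stdNormalCDF_stdNormalCDFInv hpA]
  have h_power : (gaussianReal δ ⟨σ ^ 2, sq_nonneg σ⟩).real (Iic t)
      = stdNormalCDF (stdNormalCDFInv pA - δ / σ) := by
    rw [gaussianReal_Iic_eq_stdNormalCDF δ hσ, sub_div, mul_div_cancel_left₀ _ hσ.ne']
  refine ⟨fun h hh h01 hμh => ?_, (integral_indicator_one measurableSet_Iic).trans h_power⟩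
  rw [← h_power]
  exact gaussianReal_real_Iic_le_integral hδ hv hh h01 t (hμh.trans h_size.symm)
end
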